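/- arXiv:2603.27547 — 3 statements merged into one kernel-verified Lean document; each statement's English description precedes it below -/
import Mathlib

section
/- Let ⟨W,R⟩ be a modal frame with W countable, w0 ∈ W, G the stabilizer of w0 in the automorphism group of ⟨W,R⟩, and let P be a probability measure on Ω = W → (Fin k → Bool) that is modally exchangeable at w0. Let ℱ^G be the G-invariant σ-field. Then there exists a Markov kernel κ from Ω to Ω, measurable with respect to ℱ^G, such that: (i) P(A) = ∫ κ(ω, A) dP(ω) for every measurable A (κ is a regular conditional probability for P given ℱ^G); (ii) for every π ∈ G, for P-almost every ω the measure κ(ω,·) is invariant under the action of π on Ω; and (iii) for every A ∈ ℱ^G, for P-almost every ω one has κ(ω, A) ∈ {0,1}. -/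
open MeasureTheory ProbabilityTheory

/-- `π` is an automorphism of the modal frame `⟨W, R⟩`. -/
def IsFrameAut {W : Type*} (R : W → W → Prop) (π : Equiv.Perm W) : Prop :=
  ∀ w v, R w v ↔ R (π w) (π v)

/-- The stabilizer of `w0` in the automorphism group of `⟨W, R⟩`. -/
def Stab {W : Type*} (R : W → W → Prop) (w0 : W) : Set (Equiv.Perm W) :=
  {π | IsFrameAut R π ∧ π w0 = w0}

/-- Action of an automorphism on valuations: `(π · V)(w) = V(π⁻¹ w)`. -/
def actV {W : Type*} {k : ℕ} (π : Equiv.Perm W) (V : W → Fin k → Bool) :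
    W → Fin k → Bool :=
  fun w => V (π.symm w)

/-- `P` is modally exchangeable at `w0`: invariant under the stabilizer action. -/
def ModallyExchangeable {W : Type*} (R : W → W → Prop) (w0 : W) {k : ℕ}
    (P : Measure (W → Fin k → Bool)) : Prop :=
  ∀ π ∈ Stab R w0, ∀ A : Set (W → Fin k → Bool), MeasurableSet A →
    P (actV π ⁻¹' A) = P A

/-- The `G`-invariant σ-field `ℱ^G`. -/
def invSigma {W : Type*} (R : W → W → Prop) (w0 : W) (k : ℕ) :
    MeasurableSpace (W → Fin k → Bool) where
  MeasurableSet' A := MeasurableSet A ∧ ∀ π ∈ Stab R w0, actV π ⁻¹' A = A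
  measurableSet_empty := ⟨MeasurableSet.empty, fun π _ => by simp⟩
  measurableSet_compl := fun A hA =>
    ⟨hA.1.compl, fun π hπ => by rw [Set.preimage_compl, hA.2 π hπ]⟩
  measurableSet_iUnion := fun f hf =>
    ⟨MeasurableSet.iUnion fun i => (hf i).1, fun π hπ => by
      simp only [Set.preimage_iUnion]
      exact Set.iUnion_congr fun i => (hf i).2 π hπ⟩


private lemma countable_generatePiSystem {α : Type*} {S : Set (Set α)} (hS : S.Countable) :
    (generatePiSystem S).Countable := by
  have hsub : generatePiSystem S ⊆ Set.sInter '' {T | T.Finite ∧ T ⊆ S} := by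
    intro t ht
    induction ht with
    | base h => exact ⟨{_}, ⟨Set.finite_singleton _, by simpa⟩, by simp⟩
    | inter h_s h_t h_ne ih_s ih_t =>
        obtain ⟨T1, ⟨h1f, h1s⟩, rfl⟩ := ih_s
        obtain ⟨T2, ⟨h2f, h2s⟩, rfl⟩ := ih_t
        exact ⟨T1 ∪ T2, ⟨h1f.union h2f, Set.union_subset h1s h2s⟩,
          Set.sInter_union T1 T2⟩
  exact ((Set.countable_setOf_finite_subset hS).image _).mono hsub

private lemma measurable_actV {W : Type*} {k : ℕ} (π : Equiv.Perm W) :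
    Measurable (actV (k := k) π) :=
  measurable_pi_lambda _ fun _ => measurable_pi_apply _

/-- **Ergodic decomposition.**  There is a Markov kernel, measurable with
respect to `ℱ^G`, which (i) disintegrates `P` over `ℱ^G`, (ii) has `G`-invariant
fibers, and (iii) assigns each `ℱ^G`-measurable set conditional probability
`0` or `1` (ergodicity of the fibers on the invariant σ-field). -/
theorem ergodic_decomposition {W : Type} [Countable W] (R : W → W → Prop)
    (w0 : W) (k : ℕ)
    (P : Measure (W → Fin k → Bool)) [IsProbabilityMeasure P]
    (hP : ModallyExchangeable R w0 P) :
    ∃ κ : @Kernel (W → Fin k → Bool) (W → Fin k → Bool) (invSigma R w0 k)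
        inferInstance,
      @IsMarkovKernel _ _ (invSigma R w0 k) inferInstance κ ∧
      (∀ A : Set (W → Fin k → Bool), MeasurableSet A →
        P A = ∫⁻ ω, κ ω A ∂P) ∧
      (∀ π ∈ Stab R w0, ∀ᵐ ω ∂P, Measure.map (actV π) (κ ω) = κ ω) ∧
      (∀ A : Set (W → Fin k → Bool),
        MeasurableSet[invSigma R w0 k] A →
        ∀ᵐ ω ∂P, κ ω A = 0 ∨ κ ω A = 1) := by
  classical
  have hm : invSigma R w0 k ≤ MeasurableSpace.pi := fun A hA => hA.1
  haveI : SigmaFinite (P.trim hm) := by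
    haveI := isFiniteMeasure_trim hm (μ := P)
    infer_instance
  -- set integrals of indicators
  have hind : ∀ {A : Set (W → Fin k → Bool)}, MeasurableSet A →
      Integrable (Set.indicator A (fun _ => (1 : ℝ))) P :=
    fun hA => (integrable_const 1).indicator hA
  have hsi : ∀ (A s : Set (W → Fin k → Bool)), MeasurableSet A →
      ∫ x in s, Set.indicator A (fun _ => (1 : ℝ)) x ∂P = (P (s ∩ A)).toReal := by
    intro A s hA
    rw [setIntegral_indicator hA, setIntegral_const]
    simp [measureReal_def]
  -- invariance of conditional expectations of indicators
  have key : ∀ π ∈ Stab R w0, ∀ (A : Set (W → Fin k → Bool)), MeasurableSet A →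
      P[Set.indicator (actV π ⁻¹' A) (fun _ => (1 : ℝ)) | invSigma R w0 k]
        =ᵐ[P] P[Set.indicator A (fun _ => (1 : ℝ)) | invSigma R w0 k] := by
    intro π hπ A hA
    have hfA : MeasurableSet (actV π ⁻¹' A) := hA.preimage (measurable_actV π)
    refine (ae_eq_condExp_of_forall_setIntegral_eq hm (hind hfA)
      (fun s _ _ => integrable_condExp.integrableOn) ?_
      (StronglyMeasurable.aestronglyMeasurable stronglyMeasurable_condExp)).symm
    intro s hs _
    rw [setIntegral_condExp hm (hind hA) hs, hsi A s hA, hsi _ s hfA]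
    congr 1
    have hsinv := hs.2 π hπ
    have hpre : s ∩ actV π ⁻¹' A = actV π ⁻¹' (s ∩ A) := by
      rw [Set.preimage_inter, hsinv]
    rw [hpre, hP π hπ _ (hs.1.inter hA)]
  refine ⟨condExpKernel P (invSigma R w0 k), inferInstance, ?_, ?_, ?_⟩
  · -- (i) disintegration
    intro A hA
    have h1 := condExpKernel_ae_eq_condExp hm hA (μ := P)
    simp only [measureReal_def] at h1
    have hmeas : Measurable fun ω => condExpKernel P (invSigma R w0 k) ω A :=
      (measurable_condExpKernel hA).mono hm le_rfl
    have h2 : ∫ ω, (condExpKernel P (invSigma R w0 k) ω A).toReal ∂P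
        = (∫⁻ ω, condExpKernel P (invSigma R w0 k) ω A ∂P).toReal :=
      integral_toReal hmeas.aemeasurable (ae_of_all _ fun ω => measure_lt_top _ _)
    have h3 : ∫ ω, (condExpKernel P (invSigma R w0 k) ω A).toReal ∂P = (P A).toReal := by
      rw [integral_congr_ae h1, integral_condExp hm]
      simpa [measureReal_def, Pi.one_def] using integral_indicator_one hA (μ := P)
    have hfin : ∫⁻ ω, condExpKernel P (invSigma R w0 k) ω A ∂P ≠ ⊤ := by
      have hle : ∫⁻ ω, condExpKernel P (invSigma R w0 k) ω A ∂P ≤ 1 := by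
        calc ∫⁻ ω, condExpKernel P (invSigma R w0 k) ω A ∂P ≤ ∫⁻ _, (1 : ENNReal) ∂P :=
              lintegral_mono fun ω => prob_le_one
          _ = 1 := by simp
      exact ne_top_of_le_ne_top ENNReal.one_ne_top hle
    exact (ENNReal.toReal_eq_toReal_iff' (measure_ne_top P A) hfin).mp (by rw [← h3, h2])
  · -- (ii) invariant fibers
    intro π hπ
    have hf : Measurable (actV (k := k) π) := measurable_actV π
    obtain ⟨b, hbc, hbgen⟩ :=
      (inferInstance :
        MeasurableSpace.CountablyGenerated (W → Fin k → Bool)).isCountablyGenerated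
    have hSc : (generatePiSystem b).Countable := countable_generatePiSystem hbc
    have hSmeas : ∀ A ∈ generatePiSystem b, MeasurableSet A := fun A hA =>
      generatePiSystem_measurableSet
        (fun s hs => hbgen ▸ MeasurableSpace.measurableSet_generateFrom hs) A hA
    have hgen : (MeasurableSpace.pi : MeasurableSpace (W → Fin k → Bool))
        = MeasurableSpace.generateFrom (generatePiSystem b) := by
      rw [generateFrom_generatePiSystem_eq]; exact hbgen
    have hAe : ∀ A ∈ generatePiSystem b, ∀ᵐ ω ∂P,
        condExpKernel P (invSigma R w0 k) ω (actV π ⁻¹' A) = condExpKernel P (invSigma R w0 k) ω A := by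
      intro A hA
      have hAm := hSmeas A hA
      have h1 := condExpKernel_ae_eq_condExp hm (hAm.preimage hf) (μ := P)
      simp only [measureReal_def] at h1
      have h2 := condExpKernel_ae_eq_condExp hm hAm (μ := P)
      simp only [measureReal_def] at h2
      filter_upwards [h1, h2, key π hπ A hAm] with ω e1 e2 e3
      have h4 : (condExpKernel P (invSigma R w0 k) ω (actV π ⁻¹' A)).toReal
          = (condExpKernel P (invSigma R w0 k) ω A).toReal := by rw [e1, e2, ← e3]
      exact (ENNReal.toReal_eq_toReal_iff' (measure_ne_top _ _) (measure_ne_top _ _)).mp h4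
    filter_upwards [(ae_ball_iff hSc).mpr hAe] with ω hω
    haveI : IsProbabilityMeasure (Measure.map (actV π) (condExpKernel P (invSigma R w0 k) ω)) :=
      Measure.isProbabilityMeasure_map hf.aemeasurable
    refine ext_of_generate_finite (generatePiSystem b) hgen
      (isPiSystem_generatePiSystem b) (fun A hA => ?_) ?_
    · rw [Measure.map_apply hf (hSmeas A hA)]
      exact hω A hA
    · rw [Measure.map_apply hf MeasurableSet.univ, Set.preimage_univ]
  · -- (iii) ergodicity on the invariant σ-field
    intro A hA
    have h1 := condExpKernel_ae_eq_condExp hm hA.1 (μ := P)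
    simp only [measureReal_def] at h1
    have hsm : StronglyMeasurable[invSigma R w0 k] (Set.indicator A (fun _ => (1 : ℝ))) :=
      stronglyMeasurable_const.indicator hA
    have h2 : P[Set.indicator A (fun _ => (1 : ℝ)) | invSigma R w0 k]
        = Set.indicator A (fun _ => (1 : ℝ)) :=
      condExp_of_stronglyMeasurable hm hsm ((integrable_const 1).indicator hA.1)
    filter_upwards [h1] with ω hω
    rw [h2] at hω
    by_cases hωA : ω ∈ A
    · right
      have ht1 : (condExpKernel P (invSigma R w0 k) ω A).toReal = 1 := by
        rw [hω]; simp [Set.indicator_of_mem hωA]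
      exact (ENNReal.toReal_eq_one_iff _).mp ht1
    · left
      have ht0 : (condExpKernel P (invSigma R w0 k) ω A).toReal = 0 := by
        rw [hω]; simp [Set.indicator_of_notMem hωA]
      exact ((ENNReal.toReal_eq_zero_iff _).mp ht0).resolve_right (measure_ne_top _ _)
end

section
/- Let W = Option (ℕ ⊕ ℕ) with designated world w0 = none, and define the accessibility relation R by: R(none, w) for all w ∈ W; R(some (inl i), some (inl j)) for all i,j ∈ ℕ; R(w,w) for all w ∈ W; and no other pairs are related. Let G be the stabilizer of w0 in the automorphism group of ⟨W,R⟩. Then there exists a probability measure P on Ω = W → Bool, invariant under the action of every π ∈ G, such that P({V : V(some (inl 0)) = true}) ≠ P({V : V(some (inr 0)) = true}); i.e., the marginal laws of the valuation at a world of the first orbit and at a world of the second orbit differ, even though both worlds are accessible from w0. -/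
open MeasureTheory

/-- Action of an automorphism on valuations (single atom): `(π · V)(w) = V(π⁻¹ w)`. -/
def actB {W : Type*} (π : Equiv.Perm W) (V : W → Bool) : W → Bool :=
  fun w => V (π.symm w)

/-- The two-cluster accessibility relation on `Option (ℕ ⊕ ℕ)`:
`none` accesses everything, the `inl`-worlds are mutually accessible,
every world accesses itself, and nothing else is related. -/
def R2 : Option (ℕ ⊕ ℕ) → Option (ℕ ⊕ ℕ) → Prop := fun a b =>
  a = none ∨ a = b ∨ ∃ i j : ℕ, a = some (Sum.inl i) ∧ b = some (Sum.inl j)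

/-- The indicator valuation of the `inl`-cluster. -/
def V0 : Option (ℕ ⊕ ℕ) → Bool := fun w =>
  match w with
  | some (Sum.inl _) => true
  | _ => false

lemma V0_fixed (π : Equiv.Perm (Option (ℕ ⊕ ℕ))) (hπ : π ∈ Stab R2 none) :
    ∀ u, V0 (π u) = V0 u := by
  obtain ⟨haut, hfix⟩ := hπ
  intro u
  match hu : u with
  | none => rw [hfix]
  | some (Sum.inl i) =>
      have h1 : R2 (some (Sum.inl i)) (some (Sum.inl (i+1))) :=
        Or.inr (Or.inr ⟨i, i+1, rfl, rfl⟩)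
      have h2 := (haut _ _).mp h1
      rcases h2 with h | h | ⟨a, b, ha, hb⟩
      · exact absurd (π.injective (h.trans hfix.symm)) (by simp)
      · have : (some (Sum.inl i) : Option (ℕ ⊕ ℕ)) = some (Sum.inl (i+1)) :=
          π.injective h
        simp at this
      · rw [ha]; rfl
  | some (Sum.inr k) =>
      -- show π u is not an inl-world
      rcases hv : π (some (Sum.inr k)) with _ | x
      · exact absurd (π.injective (hv.trans hfix.symm)) (by simp)
      · rcases x with j | j
        · -- contradiction
          exfalso
          have h1 : R2 (π (some (Sum.inr k))) (π (π.symm (some (Sum.inl (j+1))))) := by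
            rw [hv, Equiv.apply_symm_apply]
            exact Or.inr (Or.inr ⟨j, j+1, rfl, rfl⟩)
          have h2 := (haut _ _).mpr h1
          rcases h2 with h | h | ⟨a, b, ha, hb⟩
          · simp at h
          · have := congrArg π h
            rw [hv, Equiv.apply_symm_apply] at this
            simp at this
          · simp at ha
        · rfl

/-- **Two-orbit discrimination.**  On the two-cluster frame there is a
`G`-invariant (modally exchangeable at `none`) probability measure on
`Ω = W → Bool` whose marginal at the world `some (inl 0)` differs from its
marginal at the world `some (inr 0)`, although both are accessible from `none`. -/
theorem two_orbit_discrimination :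
    ∃ P : Measure (Option (ℕ ⊕ ℕ) → Bool),
      IsProbabilityMeasure P ∧
      (∀ π ∈ Stab R2 none, ∀ A : Set (Option (ℕ ⊕ ℕ) → Bool),
        MeasurableSet A → P (actB π ⁻¹' A) = P A) ∧
      P {V | V (some (Sum.inl 0)) = true} ≠ P {V | V (some (Sum.inr 0)) = true} := by
  refine ⟨Measure.dirac V0, inferInstance, ?_, ?_⟩
  · intro π hπ A hA
    classical
    have hact : actB π V0 = V0 := by
      funext w
      show V0 (π.symm w) = V0 w
      conv_rhs => rw [← Equiv.apply_symm_apply π w]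
      exact (V0_fixed π hπ _).symm
    have hmeas : Measurable (actB π) := by
      apply measurable_pi_lambda
      intro w
      exact measurable_pi_apply _
    rw [Measure.dirac_apply' _ (hmeas hA), Measure.dirac_apply' _ hA]
    have hmem : V0 ∈ actB π ⁻¹' A ↔ V0 ∈ A := by rw [Set.mem_preimage, hact]
    rw [Set.indicator_apply, Set.indicator_apply]
    exact if_congr hmem rfl rfl
  · have h1 : MeasurableSet {V : Option (ℕ ⊕ ℕ) → Bool | V (some (Sum.inl 0)) = true} :=
      (measurable_pi_apply (X := fun _ : Option (ℕ ⊕ ℕ) => Bool) (some (Sum.inl 0)))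
        (show MeasurableSet {b : Bool | b = true} from trivial)
    have h2 : MeasurableSet {V : Option (ℕ ⊕ ℕ) → Bool | V (some (Sum.inr 0)) = true} :=
      (measurable_pi_apply (X := fun _ : Option (ℕ ⊕ ℕ) => Bool) (some (Sum.inr 0)))
        (show MeasurableSet {b : Bool | b = true} from trivial)
    rw [Measure.dirac_apply' _ h1, Measure.dirac_apply' _ h2]
    simp [Set.indicator, V0]
end

section
/- Let P be a probability measure on ℕ → Bool (with the product σ-algebra) that is exchangeable, i.e., invariant under the coordinate permutation induced by every permutation of ℕ with finite support. Then there exists a probability measure μ on the interval [0,1] such that for every measurable A, P(A) = ∫_0^1 Bernoulli(θ)^{⊗ℕ}(A) dμ(θ), where Bernoulli(θ)^{⊗ℕ} is the product measure on ℕ → Bool under which the coordinates are i.i.d. Bernoulli with parameter θ. -/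
open MeasureTheory

/-- The Bernoulli measure on `Bool` with mass `θ` on `true` and `1 - θ` on `false`. -/
noncomputable def bernoulliMeasure (θ : ℝ) : Measure Bool :=
  ENNReal.ofReal θ • Measure.dirac true + ENNReal.ofReal (1 - θ) • Measure.dirac false

/-- `Q` is the i.i.d. product measure on `ι → X` with common coordinate law `Λ`,
characterized by its finite-dimensional cylinder probabilities. -/
def IsIIDProduct {ι X : Type*} [MeasurableSpace X] (Λ : Measure X)
    (Q : Measure (ι → X)) : Prop :=
  IsProbabilityMeasure Q ∧
    ∀ (s : Finset ι) (B : ι → Set X), (∀ i, MeasurableSet (B i)) →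
      Q {x | ∀ i ∈ s, x i ∈ B i} = ∏ i ∈ s, Λ (B i)

/-!
By exchangeability, the probability of a cylinder `{x | ∀ r, x (τ r) ∈ B r}` does not depend on
the injective index map `τ : ι → ℕ`. Expanding a product `∏ r, Lₙ(B r)` of empirical frequencies
as a sum over all `n ^ |ι|` maps `ι → Fin n`, of which all but `o(n ^ |ι|)` are injective, shows
that `E[∏ r, Lₙ(B r)]` tends to that cylinder probability.

An `L²` estimate `E[(Lₙ(B) - Lₘ(B))²] ≤ 1 / n` (for `n ≤ m`) and Borel–Cantelli along `n = 2 ^ k`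
give an almost sure limit `Z` of the frequency of `true`. On `Bool`, `Lₙ(B)` is an affine
function of the frequency of `true`, so by dominated convergence every cylinder probability equals
`E[∏ r, Bernoulli(Z)(B r)]`. Hence `P` agrees with the mixture of i.i.d. Bernoulli laws under the
law of `Z` on the π-system of square cylinders, so the two measures coincide.
-/

open Filter Set Topology
open scoped ENNReal

open Classical in
noncomputable def bernoulliMass (θ : ℝ) (B : Set Bool) : ℝ :=
  (if true ∈ B then θ else 0) + (if false ∈ B then 1 - θ else 0)

lemma bernoulliMass_mem_Icc (θ : Icc (0 : ℝ) 1) (B : Set Bool) :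
    bernoulliMass θ B ∈ Icc (0 : ℝ) 1 := by
  obtain ⟨θ, h0, h1⟩ := θ
  constructor <;> unfold bernoulliMass <;> split_ifs <;> linarith

lemma prod_bernoulliMass_mem_Icc {ι : Type*} (θ : Icc (0 : ℝ) 1) (s : Finset ι)
    (B : ι → Set Bool) : ∏ i ∈ s, bernoulliMass θ (B i) ∈ Icc (0 : ℝ) 1 :=
  ⟨Finset.prod_nonneg fun i _ => (bernoulliMass_mem_Icc θ (B i)).1,
    Finset.prod_le_one (fun i _ => (bernoulliMass_mem_Icc θ (B i)).1)
      fun i _ => (bernoulliMass_mem_Icc θ (B i)).2⟩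

lemma continuous_bernoulliMass (B : Set Bool) : Continuous (bernoulliMass · B) := by
  unfold bernoulliMass; split_ifs <;> fun_prop

lemma bernoulliMeasure_apply (θ : Icc (0 : ℝ) 1) (B : Set Bool) :
    bernoulliMeasure θ B = ENNReal.ofReal (bernoulliMass θ B) := by
  obtain ⟨θ, h0, h1⟩ := θ
  have h1' : 0 ≤ 1 - θ := by linarith
  simp only [bernoulliMeasure, bernoulliMass, Measure.add_apply, Measure.smul_apply,
    Measure.dirac_apply' _ (MeasurableSet.of_discrete (s := B)), smul_eq_mul]
  split_ifs <;> simp [*, ← ENNReal.ofReal_add h0 h1']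

instance (θ : Icc (0 : ℝ) 1) : IsProbabilityMeasure (bernoulliMeasure θ) :=
  ⟨by rw [bernoulliMeasure_apply]; simp [bernoulliMass]⟩

lemma isIIDProduct_infinitePi {ι X : Type*} [MeasurableSpace X] (Λ : Measure X)
    [IsProbabilityMeasure Λ] : IsIIDProduct Λ (Measure.infinitePi fun _ : ι => Λ) :=
  ⟨inferInstance, fun _ _ hB => Measure.infinitePi_pi _ fun i _ => hB i⟩

noncomputable def bernoulliSeq (θ : Icc (0 : ℝ) 1) : Measure (ℕ → Bool) :=
  Measure.infinitePi fun _ => bernoulliMeasure θ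

instance (θ : Icc (0 : ℝ) 1) : IsProbabilityMeasure (bernoulliSeq θ) := by
  unfold bernoulliSeq; infer_instance

lemma bernoulliSeq_pi (θ : Icc (0 : ℝ) 1) (s : Finset ℕ) (t : ℕ → Set Bool) :
    bernoulliSeq θ ((s : Set ℕ).pi t) = ENNReal.ofReal (∏ i ∈ s, bernoulliMass θ (t i)) := by
  rw [bernoulliSeq, Measure.infinitePi_pi _ fun i _ => .of_discrete,
    ENNReal.ofReal_prod_of_nonneg fun i _ => (bernoulliMass_mem_Icc θ (t i)).1]
  exact Finset.prod_congr rfl fun i _ => bernoulliMeasure_apply θ (t i)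

lemma isPiSystem_squareCylinders_measurableSet {ι : Type*} {X : ι → Type*}
    [∀ i, MeasurableSpace (X i)] :
    IsPiSystem (squareCylinders fun i => {s : Set (X i) | MeasurableSet s}) :=
  isPiSystem_squareCylinders (fun _ => MeasurableSpace.isPiSystem_measurableSet)
    fun _ => MeasurableSet.univ

lemma measurable_bernoulliSeq : Measurable bernoulliSeq := by
  refine .measure_of_isPiSystem_of_isProbabilityMeasure generateFrom_squareCylinders.symm
    isPiSystem_squareCylinders_measurableSet ?_
  rintro _ ⟨s, t, -, rfl⟩
  simp_rw [bernoulliSeq_pi]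
  exact ENNReal.measurable_ofReal.comp <| Finset.measurable_prod _ fun i _ =>
    (continuous_bernoulliMass (t i)).measurable.comp measurable_subtype_coe

lemma Equiv.Perm.exists_finite_support_extending_pair {α ι : Type*} [Finite ι] (f g : ι → α)
    (hf : Function.Injective f) (hg : Function.Injective g) :
    ∃ σ : Equiv.Perm α, {a | σ a ≠ a}.Finite ∧ ∀ i, σ (f i) = g i := by
  classical
  have : Fintype ι := Fintype.ofFinite ι
  let s : Finset α := Finset.univ.image f ∪ Finset.univ.image g
  let f' : ι → s := fun i => ⟨f i, by simp [s]⟩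
  let g' : ι → s := fun i => ⟨g i, by simp [s]⟩
  obtain ⟨π, hπ⟩ := Equiv.Perm.exists_extending_pair f' g'
    (fun i j h => hf (congrArg Subtype.val h)) (fun i j h => hg (congrArg Subtype.val h))
  refine ⟨Equiv.Perm.ofSubtype π, s.finite_toSet.subset fun a ha => ?_, fun i => ?_⟩
  · by_contra has
    exact ha (Equiv.Perm.ofSubtype_apply_of_not_mem π has)
  · simpa [f', g'] using
      (Equiv.Perm.ofSubtype_apply_coe π (f' i)).trans (congrArg Subtype.val (hπ i))

lemma Finset.abs_sum_sub_card_mul_le {α : Type*} (s : Finset α) (p : α → Prop) [DecidablePred p]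
    {a : α → ℝ} {c : ℝ} (hp : ∀ σ ∈ s, p σ → a σ = c) (h : ∀ σ ∈ s, |a σ - c| ≤ 1) :
    |∑ σ ∈ s, a σ - s.card * c| ≤ (s.filter fun σ => ¬ p σ).card := by
  have hsupp : ∑ σ ∈ s.filter (fun σ => ¬ p σ), (a σ - c) = ∑ σ ∈ s, (a σ - c) :=
    Finset.sum_filter_of_ne fun σ hσ hne hpσ => hne (sub_eq_zero.2 (hp σ hσ hpσ))
  rw [← nsmul_eq_mul, ← Finset.sum_const, ← Finset.sum_sub_distrib, ← hsupp]
  calc |∑ σ ∈ s.filter fun σ => ¬ p σ, (a σ - c)|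
      _ ≤ ∑ σ ∈ s.filter (fun σ => ¬ p σ), |a σ - c| := Finset.abs_sum_le_sum_abs _ _
      _ ≤ ∑ _σ ∈ s.filter (fun σ => ¬ p σ), (1 : ℝ) :=
        Finset.sum_le_sum fun σ hσ => h σ (Finset.mem_of_mem_filter σ hσ)
      _ = _ := by rw [Finset.sum_const, nsmul_eq_mul, mul_one]

lemma card_filter_injective (ι : Type*) [Fintype ι] [DecidableEq ι] (n : ℕ) :
    (Finset.univ.filter fun σ : ι → Fin n => Function.Injective σ).card =
      n.descFactorial (Fintype.card ι) := by
  rw [← Fintype.card_subtype, Fintype.card_congr (Equiv.subtypeInjectiveEquivEmbedding ι (Fin n)),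
    Fintype.card_embedding_eq, Fintype.card_fin]

lemma tendsto_descFactorial_div_pow (m : ℕ) :
    Tendsto (fun n : ℕ => (n.descFactorial m : ℝ) / (n : ℝ) ^ m) atTop (𝓝 1) := by
  have hlower : Tendsto (fun n : ℕ => (1 - m / (n : ℝ)) ^ m) atTop (𝓝 1) := by
    simpa using ((tendsto_const_div_atTop_nhds_zero_nat (m : ℝ)).const_sub 1).pow m
  refine tendsto_of_tendsto_of_tendsto_of_le_of_le' hlower tendsto_const_nhds ?_ ?_
  · filter_upwards [eventually_ge_atTop (m + 1)] with n hn
    have hn0 : (0 : ℝ) < n := Nat.cast_pos.2 (by omega)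
    have hmn : (m : ℝ) ≤ n := by exact_mod_cast (by omega : m ≤ n)
    rw [one_sub_div hn0.ne', div_pow, div_le_div_iff_of_pos_right (by positivity)]
    calc ((n : ℝ) - m) ^ m ≤ ((n + 1 - m : ℕ) : ℝ) ^ m := by
          gcongr
          rw [Nat.cast_sub (by omega)]; push_cast; linarith
      _ ≤ n.descFactorial m := by exact_mod_cast Nat.pow_sub_le_descFactorial n m
  · filter_upwards with n
    exact div_le_one_of_le₀ (by exact_mod_cast Nat.descFactorial_le_pow n m) (by positivity)

section EmpiricalFreq

variable {X : Type*}

noncomputable def empiricalFreq (n : ℕ) (x : ℕ → X) (B : Set X) : ℝ :=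
  (∑ j ∈ Finset.range n, B.indicator 1 (x j)) / n

lemma empiricalFreq_nonneg (n : ℕ) (x : ℕ → X) (B : Set X) : 0 ≤ empiricalFreq n x B :=
  div_nonneg (Finset.sum_nonneg fun _ _ => Set.indicator_nonneg (fun _ _ => zero_le_one) _)
    n.cast_nonneg

lemma empiricalFreq_le_one (n : ℕ) (x : ℕ → X) (B : Set X) : empiricalFreq n x B ≤ 1 := by
  refine div_le_one_of_le₀ ?_ n.cast_nonneg
  calc ∑ j ∈ Finset.range n, B.indicator 1 (x j) ≤ ∑ _j ∈ Finset.range n, (1 : ℝ) :=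
        Finset.sum_le_sum fun _ _ => Set.indicator_le_self' (fun _ _ => zero_le_one) _
    _ = n := by simp

lemma prod_empiricalFreq {ι : Type*} [Fintype ι] [DecidableEq ι] (n : ℕ) (x : ℕ → X)
    (B : ι → Set X) :
    ∏ r, empiricalFreq n x (B r) =
      (∑ σ : ι → Fin n, {y : ℕ → X | ∀ r, y (σ r) ∈ B r}.indicator 1 x) /
        (n : ℝ) ^ Fintype.card ι := by
  simp only [empiricalFreq, Finset.prod_div_distrib, Finset.prod_const, Finset.card_univ,
    ← Fin.sum_univ_eq_sum_range (fun j => (B _).indicator 1 (x j)), Finset.prod_univ_sum,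
    Fintype.piFinset_univ]
  congr 1
  refine Finset.sum_congr rfl fun σ _ => ?_
  classical
  simp only [Set.indicator_apply, Set.mem_ofPred_eq, Pi.one_apply]
  exact Fintype.prod_boole

lemma empiricalFreq_eq_bernoulliMass {n : ℕ} (hn : n ≠ 0) (x : ℕ → Bool) (B : Set Bool) :
    empiricalFreq n x B = bernoulliMass (empiricalFreq n x {true}) B := by
  classical
  have hind : ∀ b : Bool, B.indicator (1 : Bool → ℝ) b =
      (if true ∈ B then ({true} : Set Bool).indicator 1 b else 0) +
        (if false ∈ B then 1 - ({true} : Set Bool).indicator 1 b else 0) := by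
    intro b
    cases b <;> by_cases ht : true ∈ B <;> by_cases hf : false ∈ B <;> simp [ht, hf]
  have hn' : (n : ℝ) ≠ 0 := Nat.cast_ne_zero.2 hn
  simp only [empiricalFreq, bernoulliMass, hind, Finset.sum_add_distrib]
  split_ifs <;> simp [Finset.sum_sub_distrib, sub_div, hn']

variable [MeasurableSpace X]

lemma measurable_empiricalFreq (n : ℕ) {B : Set X} (hB : MeasurableSet B) :
    Measurable fun x => empiricalFreq n x B :=
  (Finset.measurable_sum _ fun j _ =>
    (measurable_const.indicator hB).comp (measurable_pi_apply j)).div_const _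

lemma measurableSet_cylinder {ι : Type*} [Countable ι] (τ : ι → ℕ) {B : ι → Set X}
    (hB : ∀ r, MeasurableSet (B r)) : MeasurableSet {x : ℕ → X | ∀ r, x (τ r) ∈ B r} := by
  simp only [ofPred_forall]
  exact .iInter fun r => measurable_pi_apply (τ r) (hB r)

lemma integral_prod_empiricalFreq (P : Measure (ℕ → X)) [IsFiniteMeasure P] {ι : Type*}
    [Fintype ι] [DecidableEq ι] (n : ℕ) {B : ι → Set X} (hB : ∀ r, MeasurableSet (B r)) :
    ∫ x, ∏ r, empiricalFreq n x (B r) ∂P =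
      (∑ σ : ι → Fin n, P.real {y | ∀ r, y (σ r) ∈ B r}) / (n : ℝ) ^ Fintype.card ι := by
  simp_rw [prod_empiricalFreq]
  rw [integral_div, integral_finsetSum _ fun σ _ =>
    (integrable_const 1).indicator (measurableSet_cylinder _ hB)]
  simp_rw [integral_indicator_one (measurableSet_cylinder _ hB)]

end EmpiricalFreq

section Exchangeable

variable {X : Type*} [MeasurableSpace X] {P : Measure (ℕ → X)}

def Exchangeable (P : Measure (ℕ → X)) : Prop :=
  ∀ σ : Equiv.Perm ℕ, {n | σ n ≠ n}.Finite →
    ∀ A : Set (ℕ → X), MeasurableSet A → P ((fun x n => x (σ.symm n)) ⁻¹' A) = P A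

lemma Exchangeable.measure_cylinder_eq (hP : Exchangeable P) {ι : Type*} [Finite ι]
    {τ τ' : ι → ℕ} (hτ : Function.Injective τ) (hτ' : Function.Injective τ') {B : ι → Set X}
    (hB : ∀ r, MeasurableSet (B r)) :
    P {x | ∀ r, x (τ r) ∈ B r} = P {x | ∀ r, x (τ' r) ∈ B r} := by
  obtain ⟨σ, hσ, hστ⟩ := Equiv.Perm.exists_finite_support_extending_pair τ τ' hτ hτ'
  have : Countable ι := Finite.to_countable
  rw [← hP σ hσ _ (measurableSet_cylinder τ' hB)]
  congr 1
  ext x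
  simp [← hστ]

lemma Exchangeable.abs_integral_prod_empiricalFreq_sub_le [IsProbabilityMeasure P]
    (hP : Exchangeable P) {ι : Type*} [Fintype ι] {τ : ι → ℕ} (hτ : Function.Injective τ)
    {B : ι → Set X} (hB : ∀ r, MeasurableSet (B r)) {n : ℕ} (hn : n ≠ 0) :
    |∫ x, ∏ r, empiricalFreq n x (B r) ∂P - P.real {x | ∀ r, x (τ r) ∈ B r}| ≤
      1 - (n.descFactorial (Fintype.card ι) : ℝ) / (n : ℝ) ^ Fintype.card ι := by
  classical
  set c := P.real {x | ∀ r, x (τ r) ∈ B r}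
  set m := Fintype.card ι
  have hN : (0 : ℝ) < (n : ℝ) ^ m := by positivity
  have hsum := Finset.abs_sum_sub_card_mul_le Finset.univ (Function.Injective (β := Fin n))
    (a := fun σ : ι → Fin n => P.real {y | ∀ r, y (σ r) ∈ B r}) (c := c)
    (fun σ _ hσ => by
      simp only [measureReal_def, c]
      rw [hP.measure_cylinder_eq (τ := fun r => (σ r : ℕ)) (Fin.val_injective.comp hσ) hτ hB])
    (fun σ _ => abs_sub_le_of_nonneg_of_le measureReal_nonneg measureReal_le_one
      measureReal_nonneg measureReal_le_one)
  have hcard := Finset.card_filter_add_card_filter_not (s := Finset.univ)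
    (fun σ : ι → Fin n => Function.Injective σ)
  rw [card_filter_injective, Finset.card_univ, Fintype.card_fun, Fintype.card_fin] at hcard
  rw [Finset.card_univ, Fintype.card_fun, Fintype.card_fin, Nat.cast_pow] at hsum
  have hcardR : (n.descFactorial m : ℝ) +
      (Finset.univ.filter fun σ : ι → Fin n => ¬ Function.Injective σ).card = (n : ℝ) ^ m := by
    exact_mod_cast hcard
  rw [integral_prod_empiricalFreq P n hB,
    show ∀ S : ℝ, S / (n : ℝ) ^ m - c = (S - (n : ℝ) ^ m * c) / (n : ℝ) ^ m from
      fun S => by field_simp,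
    abs_div, abs_of_pos hN, div_le_iff₀ hN, sub_mul, one_mul, div_mul_cancel₀ _ hN.ne']
  linarith

lemma Exchangeable.tendsto_integral_prod_empiricalFreq [IsProbabilityMeasure P]
    (hP : Exchangeable P) {ι : Type*} [Fintype ι] {τ : ι → ℕ} (hτ : Function.Injective τ)
    {B : ι → Set X} (hB : ∀ r, MeasurableSet (B r)) :
    Tendsto (fun n => ∫ x, ∏ r, empiricalFreq n x (B r) ∂P) atTop
      (𝓝 (P.real {x | ∀ r, x (τ r) ∈ B r})) := by
  have hgap : Tendsto (fun n : ℕ => 1 - (n.descFactorial (Fintype.card ι) : ℝ) /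
      (n : ℝ) ^ Fintype.card ι) atTop (𝓝 0) := by
    simpa using (tendsto_descFactorial_div_pow _).const_sub 1
  refine tendsto_sub_nhds_zero_iff.1 (squeeze_zero_norm' ?_ hgap)
  filter_upwards [eventually_ne_atTop 0] with n hn
  exact hP.abs_integral_prod_empiricalFreq_sub_le hτ hB hn

variable {B : Set X}

lemma Exchangeable.integral_indicator_mul_indicator (hP : Exchangeable P) (hB : MeasurableSet B)
    (i j : ℕ) :
    ∫ x, B.indicator 1 (x i) * B.indicator 1 (x j) ∂P =
      if i = j then P.real {x | x 0 ∈ B} else P.real {x | x 0 ∈ B ∧ x 1 ∈ B} := by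
  have hprod : ∀ x : ℕ → X, B.indicator (1 : X → ℝ) (x i) * B.indicator 1 (x j) =
      {x : ℕ → X | ∀ r : Fin 2, x (![i, j] r) ∈ B}.indicator 1 x := by
    intro x
    classical
    simp only [Set.indicator_apply, Set.mem_ofPred_eq, Fin.forall_fin_two]
    split_ifs <;> simp_all
  simp_rw [hprod, integral_indicator_one (measurableSet_cylinder _ fun _ => hB), measureReal_def]
  split_ifs with hij
  · subst hij
    have := hP.measure_cylinder_eq (τ := fun _ : Fin 1 => i) (τ' := fun _ => 0)
      (Function.injective_of_subsingleton _) (Function.injective_of_subsingleton _)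
      fun _ => hB
    convert congrArg ENNReal.toReal this using 3 <;> simp [Fin.forall_fin_two]
  · have hinj : ∀ {a b : ℕ}, a ≠ b → Function.Injective ![a, b] := fun hab r r' h => by
      fin_cases r <;> fin_cases r' <;> simp_all [eq_comm]
    have := hP.measure_cylinder_eq (hinj hij) (hinj zero_ne_one) fun _ => hB
    simpa [Fin.forall_fin_two] using congrArg ENNReal.toReal this

lemma Exchangeable.integral_empiricalFreq_mul [IsProbabilityMeasure P] (hP : Exchangeable P)
    (hB : MeasurableSet B) {n m : ℕ} (hn : 0 < n) (hnm : n ≤ m) :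
    ∫ x, empiricalFreq n x B * empiricalFreq m x B ∂P =
      P.real {x | x 0 ∈ B ∧ x 1 ∈ B} +
        (P.real {x | x 0 ∈ B} - P.real {x | x 0 ∈ B ∧ x 1 ∈ B}) / m := by
  set c₁ := P.real {x | x 0 ∈ B}
  set c₂ := P.real {x | x 0 ∈ B ∧ x 1 ∈ B}
  have hind : ∀ i, Measurable fun x : ℕ → X => B.indicator (1 : X → ℝ) (x i) := fun i =>
    (measurable_const.indicator hB).comp (measurable_pi_apply i)
  have hint : ∀ i j, Integrable (fun x : ℕ → X => B.indicator 1 (x i) * B.indicator 1 (x j)) P :=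
    fun i j => .of_bound ((hind i).fun_mul (hind j)).aestronglyMeasurable 1 <| ae_of_all _
      fun x => by by_cases hi : x i ∈ B <;> by_cases hj : x j ∈ B <;> simp [hi, hj]
  have hexpand : ∀ x, empiricalFreq n x B * empiricalFreq m x B =
      (∑ i ∈ Finset.range n, ∑ j ∈ Finset.range m, B.indicator 1 (x i) * B.indicator 1 (x j)) /
        (n * m) := fun x => by
    rw [empiricalFreq, empiricalFreq, div_mul_div_comm, Finset.sum_mul_sum]
  have hrow : ∀ i ∈ Finset.range n,
      ∑ j ∈ Finset.range m, (if i = j then c₁ else c₂) = m * c₂ + (c₁ - c₂) := fun i hi => by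
    have him : i ∈ Finset.range m := Finset.mem_range.2 ((Finset.mem_range.1 hi).trans_le hnm)
    calc ∑ j ∈ Finset.range m, (if i = j then c₁ else c₂)
        = ∑ j ∈ Finset.range m, (c₂ + if i = j then c₁ - c₂ else 0) :=
          Finset.sum_congr rfl fun j _ => by split_ifs <;> ring
      _ = m * c₂ + (c₁ - c₂) := by
          rw [Finset.sum_add_distrib, Finset.sum_ite_eq, if_pos him]
          simp
  simp_rw [hexpand]
  rw [integral_div, integral_finsetSum _ fun i _ => integrable_finsetSum _ fun j _ => hint i j]
  simp_rw [integral_finsetSum _ fun j _ => hint _ j, hP.integral_indicator_mul_indicator hB]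
  rw [Finset.sum_congr rfl hrow, Finset.sum_const, Finset.card_range, nsmul_eq_mul]
  have : (n : ℝ) ≠ 0 := by positivity
  have : (m : ℝ) ≠ 0 := by have : 0 < m := hn.trans_le hnm; positivity
  field_simp

lemma Exchangeable.integral_sq_empiricalFreq_sub_le [IsProbabilityMeasure P] (hP : Exchangeable P)
    (hB : MeasurableSet B) {n m : ℕ} (hn : 0 < n) (hnm : n ≤ m) :
    ∫ x, (empiricalFreq n x B - empiricalFreq m x B) ^ 2 ∂P ≤ 1 / n := by
  have hint : ∀ k l, Integrable (fun x => empiricalFreq k x B * empiricalFreq l x B) P :=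
    fun k l => .of_bound ((measurable_empiricalFreq k hB).mul
      (measurable_empiricalFreq l hB)).aestronglyMeasurable 1 <| ae_of_all _ fun x => by
      rw [norm_mul, Real.norm_of_nonneg (empiricalFreq_nonneg ..),
        Real.norm_of_nonneg (empiricalFreq_nonneg ..)]
      exact mul_le_one₀ (empiricalFreq_le_one ..) (empiricalFreq_nonneg ..)
        (empiricalFreq_le_one ..)
  have hexpand : ∀ x, (empiricalFreq n x B - empiricalFreq m x B) ^ 2 =
      empiricalFreq n x B * empiricalFreq n x B + empiricalFreq m x B * empiricalFreq m x B -
        2 * (empiricalFreq n x B * empiricalFreq m x B) := fun x => by ring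
  have hsq : Integrable (fun x => empiricalFreq n x B * empiricalFreq n x B +
      empiricalFreq m x B * empiricalFreq m x B) P := (hint n n).add (hint m m)
  simp_rw [hexpand]
  rw [integral_sub hsq ((hint n m).const_mul 2), integral_add (hint n n) (hint m m),
    integral_const_mul, hP.integral_empiricalFreq_mul hB hn le_rfl,
    hP.integral_empiricalFreq_mul hB hn hnm,
    hP.integral_empiricalFreq_mul hB (hn.trans_le hnm) le_rfl]
  have hc : P.real {x | x 0 ∈ B ∧ x 1 ∈ B} ≤ P.real {x | x 0 ∈ B} :=
    measureReal_mono fun x hx => hx.1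
  have hc₁ : P.real {x | x 0 ∈ B} ≤ 1 := measureReal_le_one
  have hc₂ : 0 ≤ P.real {x | x 0 ∈ B ∧ x 1 ∈ B} := measureReal_nonneg
  have hm : (0 : ℝ) < m := by exact_mod_cast hn.trans_le hnm
  have hdiv : (P.real {x | x 0 ∈ B} - P.real {x | x 0 ∈ B ∧ x 1 ∈ B}) / n ≤ 1 / n := by
    gcongr; linarith
  have : 0 ≤ (P.real {x | x 0 ∈ B} - P.real {x | x 0 ∈ B ∧ x 1 ∈ B}) / m :=
    div_nonneg (by linarith) hm.le
  linarith

lemma Exchangeable.measureReal_dyadic_deviation_le [IsProbabilityMeasure P] (hP : Exchangeable P)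
    (hB : MeasurableSet B) (k : ℕ) :
    P.real {x | (9 / 16 : ℝ) ^ k ≤
      (empiricalFreq (2 ^ k) x B - empiricalFreq (2 ^ (k + 1)) x B) ^ 2} ≤ (8 / 9 : ℝ) ^ k := by
  have hint : Integrable
      (fun x => (empiricalFreq (2 ^ k) x B - empiricalFreq (2 ^ (k + 1)) x B) ^ 2) P := by
    refine .of_bound (((measurable_empiricalFreq _ hB).sub
      (measurable_empiricalFreq _ hB)).pow_const 2).aestronglyMeasurable 1 (ae_of_all _ fun x => ?_)
    rw [Real.norm_of_nonneg (sq_nonneg _), sq_le_one_iff_abs_le_one, abs_sub_le_iff]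
    constructor <;> linarith [empiricalFreq_nonneg (2 ^ k) x B, empiricalFreq_le_one (2 ^ k) x B,
      empiricalFreq_nonneg (2 ^ (k + 1)) x B, empiricalFreq_le_one (2 ^ (k + 1)) x B]
  have hL2 := hP.integral_sq_empiricalFreq_sub_le hB (n := 2 ^ k) (m := 2 ^ (k + 1))
    (by positivity) (Nat.pow_le_pow_right two_pos k.le_succ)
  have hcheb := mul_meas_ge_le_integral_of_nonneg (ae_of_all _ fun x => sq_nonneg _) hint
    ((9 / 16 : ℝ) ^ k)
  rw [← le_div_iff₀' (by positivity)] at hcheb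
  refine hcheb.trans ((div_le_div_of_nonneg_right hL2 (by positivity)).trans (le_of_eq ?_))
  rw [Nat.cast_pow, Nat.cast_two, one_div, ← inv_pow, ← div_pow]
  norm_num

lemma Exchangeable.ae_cauchySeq_empiricalFreq [IsProbabilityMeasure P] (hP : Exchangeable P)
    (hB : MeasurableSet B) : ∀ᵐ x ∂P, CauchySeq fun k => empiricalFreq (2 ^ k) x B := by
  set bad : ℕ → Set (ℕ → X) := fun k =>
    {x | (9 / 16 : ℝ) ^ k ≤ (empiricalFreq (2 ^ k) x B - empiricalFreq (2 ^ (k + 1)) x B) ^ 2}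
  have hsum : ∑' k, P (bad k) ≠ ∞ := by
    refine ne_top_of_le_ne_top ?_ (ENNReal.tsum_le_tsum fun k =>
      (ofReal_measureReal (μ := P) (s := bad k)).symm.le.trans
        (ENNReal.ofReal_le_ofReal (hP.measureReal_dyadic_deviation_le hB k)))
    rw [← ENNReal.ofReal_tsum_of_nonneg (fun k => by positivity)
      (summable_geometric_of_lt_one (by norm_num) (by norm_num))]
    exact ENNReal.ofReal_ne_top
  have hsq : ∀ k : ℕ, ((3 / 4 : ℝ) ^ k) ^ 2 = (9 / 16) ^ k := fun k => by
    rw [← pow_mul, mul_comm, pow_mul]; norm_num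
  filter_upwards [ae_eventually_notMem hsum] with x hx
  refine cauchySeq_of_summable_dist (Summable.of_norm_bounded_eventually_nat
    (summable_geometric_of_lt_one (r := 3 / 4) (by norm_num) (by norm_num)) ?_)
  filter_upwards [hx] with k hk
  rw [Real.norm_of_nonneg dist_nonneg, Real.dist_eq]
  exact (abs_lt_of_sq_lt_sq (hsq k ▸ not_le.1 hk) (by positivity)).le

end Exchangeable

/-- `projIcc` is only there to land in `[0, 1]` off the almost sure event on which the dyadic
frequencies converge. -/
noncomputable def limitFreq (x : ℕ → Bool) : Icc (0 : ℝ) 1 :=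
  projIcc 0 1 zero_le_one (limsup (fun k => empiricalFreq (2 ^ k) x {true}) atTop)

lemma measurable_limitFreq : Measurable limitFreq :=
  continuous_projIcc.measurable.comp
    (.limsup fun k => measurable_empiricalFreq (2 ^ k) (measurableSet_singleton true))

section Mixture

variable {P : Measure (ℕ → Bool)} [IsProbabilityMeasure P]

lemma Exchangeable.ae_tendsto_limitFreq (hP : Exchangeable P) :
    ∀ᵐ x ∂P, Tendsto (fun k => empiricalFreq (2 ^ k) x {true}) atTop (𝓝 (limitFreq x)) := by
  filter_upwards [hP.ae_cauchySeq_empiricalFreq (measurableSet_singleton true)] with x hx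
  obtain ⟨l, hl⟩ := cauchySeq_tendsto_of_complete hx
  have hl01 : l ∈ Icc (0 : ℝ) 1 := isClosed_Icc.mem_of_tendsto hl
    (.of_forall fun k => ⟨empiricalFreq_nonneg .., empiricalFreq_le_one ..⟩)
  rwa [limitFreq, hl.limsup_eq, projIcc_of_mem _ hl01]

lemma Exchangeable.integral_prod_bernoulliMass_limitFreq (hP : Exchangeable P) {ι : Type*}
    [Fintype ι] {τ : ι → ℕ} (hτ : Function.Injective τ) (B : ι → Set Bool) :
    ∫ x, ∏ r, bernoulliMass (limitFreq x) (B r) ∂P = P.real {x | ∀ r, x (τ r) ∈ B r} := by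
  have hB : ∀ r, MeasurableSet (B r) := fun r => .of_discrete
  refine tendsto_nhds_unique ?_ ((hP.tendsto_integral_prod_empiricalFreq hτ hB).comp
    (tendsto_pow_atTop_atTop_of_one_lt one_lt_two))
  refine tendsto_integral_of_dominated_convergence (fun _ => 1)
    (fun k => (Finset.measurable_prod _ fun r _ =>
      measurable_empiricalFreq _ (hB r)).aestronglyMeasurable) (integrable_const 1)
    (fun k => ae_of_all _ fun x => ?_) ?_
  · rw [Real.norm_of_nonneg (Finset.prod_nonneg fun r _ => empiricalFreq_nonneg ..)]
    exact Finset.prod_le_one (fun r _ => empiricalFreq_nonneg ..)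
      fun r _ => empiricalFreq_le_one ..
  · filter_upwards [hP.ae_tendsto_limitFreq] with x hx
    refine (tendsto_finsetProd _ fun r _ =>
      ((continuous_bernoulliMass (B r)).tendsto _).comp hx).congr fun k => ?_
    exact Finset.prod_congr rfl fun r _ =>
      (empiricalFreq_eq_bernoulliMass (pow_ne_zero _ two_ne_zero) x (B r)).symm

lemma Exchangeable.measure_pi (hP : Exchangeable P) (s : Finset ℕ) (t : ℕ → Set Bool) :
    P ((s : Set ℕ).pi t) =
      ∫⁻ x, ENNReal.ofReal (∏ i ∈ s, bernoulliMass (limitFreq x) (t i)) ∂P := by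
  have hmem := fun x => prod_bernoulliMass_mem_Icc (limitFreq x) s t
  have hmeas : Measurable fun x => ∏ i ∈ s, bernoulliMass (limitFreq x) (t i) :=
    Finset.measurable_prod _ fun i _ => (continuous_bernoulliMass (t i)).measurable.comp
      (measurable_subtype_coe.comp measurable_limitFreq)
  have hprod : ∀ x : ℕ → Bool, ∏ i ∈ s, bernoulliMass (limitFreq x) (t i) =
      ∏ r : s, bernoulliMass (limitFreq x) (t r) := fun x => (Finset.prod_coe_sort s _).symm
  rw [← ofReal_integral_eq_lintegral_ofReal
    (.of_bound hmeas.aestronglyMeasurable 1 <| ae_of_all _ fun x => by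
      rw [Real.norm_of_nonneg (hmem x).1]; exact (hmem x).2)
    (ae_of_all _ fun x => (hmem x).1)]
  simp_rw [hprod]
  rw [hP.integral_prod_bernoulliMass_limitFreq Subtype.val_injective, ofReal_measureReal]
  congr 1
  ext x
  simp

lemma Exchangeable.eq_bind_bernoulliSeq (hP : Exchangeable P) :
    P = (P.map limitFreq).bind bernoulliSeq := by
  have := Measure.isProbabilityMeasure_map (μ := P) measurable_limitFreq.aemeasurable
  refine ext_of_generate_finite _ generateFrom_squareCylinders.symm
    isPiSystem_squareCylinders_measurableSet ?_ ?_
  · rintro _ ⟨s, t, -, rfl⟩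
    have hS : MeasurableSet ((s : Set ℕ).pi t) := .pi s.countable_toSet fun _ _ => .of_discrete
    rw [Measure.bind_apply hS measurable_bernoulliSeq.aemeasurable,
      lintegral_map (f := fun θ => bernoulliSeq θ ((s : Set ℕ).pi t))
        ((Measure.measurable_coe hS).comp measurable_bernoulliSeq) measurable_limitFreq,
      hP.measure_pi]
    simp_rw [bernoulliSeq_pi]
  · rw [Measure.bind_apply .univ measurable_bernoulliSeq.aemeasurable]
    simp

end Mixture

/-- **Classical de Finetti theorem for binary sequences.**  Every exchangeable
probability measure on `ℕ → Bool` is a mixture of i.i.d. Bernoulli laws, where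
the mixing measure `μ` lives on `[0, 1]`. -/
theorem deFinetti_binary (P : Measure (ℕ → Bool)) [IsProbabilityMeasure P]
    (hexch : ∀ σ : Equiv.Perm ℕ, {n | σ n ≠ n}.Finite →
      ∀ A : Set (ℕ → Bool), MeasurableSet A →
        P ((fun x n => x (σ.symm n)) ⁻¹' A) = P A) :
    ∃ μ : Measure (Set.Icc (0 : ℝ) 1),
      IsProbabilityMeasure μ ∧
      ∃ Q : Set.Icc (0 : ℝ) 1 → Measure (ℕ → Bool),
        (∀ θ : Set.Icc (0 : ℝ) 1, IsIIDProduct (bernoulliMeasure θ.1) (Q θ)) ∧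
        ∀ A : Set (ℕ → Bool), MeasurableSet A →
          P A = ∫⁻ θ, Q θ A ∂μ := by
  refine ⟨P.map limitFreq, Measure.isProbabilityMeasure_map measurable_limitFreq.aemeasurable,
    bernoulliSeq, fun θ => isIIDProduct_infinitePi _, fun A hA => ?_⟩
  conv_lhs => rw [Exchangeable.eq_bind_bernoulliSeq hexch]
  exact Measure.bind_apply hA measurable_bernoulliSeq.aemeasurable
end
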